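/- arXiv:2301.02628 — 2 statements merged into one kernel-verified Lean document; each statement's English description precedes it below -/
import Mathlib

section
/- If S is an admissible pinnacle set of B_{2k+1} that is not an admissible pinnacle set of D_{2k+1}, then |S| = k. -/
/-- The pinnacle set of a word `w : Fin n → ℤ`: values `w i` (for `0 < i < n-1`)
strictly larger than both neighbors. -/
def PinSet (n : ℕ) (w : Fin n → ℤ) : Set ℤ :=
  {x | ∃ (i : ℕ) (h0 : 0 < i) (h2 : i + 1 < n),
    w ⟨i, by omega⟩ = x ∧ w ⟨i - 1, by omega⟩ < w ⟨i, by omega⟩ ∧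
      w ⟨i + 1, h2⟩ < w ⟨i, by omega⟩}

/-- `w : Fin n → ℤ` is the one-line notation of a signed permutation of rank `n`:
the absolute values of its entries are distinct elements of `{1,...,n}`
(hence a bijection onto `{1,...,n}`). -/
def IsSignedPerm (n : ℕ) (w : Fin n → ℤ) : Prop :=
  (∀ i, 1 ≤ |w i| ∧ |w i| ≤ (n : ℤ)) ∧ Function.Injective fun i => |w i|

/-- `S` is an admissible pinnacle set of the hyperoctahedral group `B_n`. -/
def APSB (n : ℕ) (S : Finset ℤ) : Prop :=
  ∃ w : Fin n → ℤ, IsSignedPerm n w ∧ PinSet n w = ↑S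

/-- `S` is an admissible pinnacle set of the type `D` group `D_n`
(signed permutations with an even number of negative one-line entries). -/
def APSD (n : ℕ) (S : Finset ℤ) : Prop :=
  ∃ w : Fin n → ℤ, IsSignedPerm n w ∧
    Even (Finset.univ.filter fun i => w i < 0).card ∧ PinSet n w = ↑S

/-- `S` is an admissible pinnacle set of the symmetric group `S_n`
(an unsigned permutation is a signed permutation with all entries positive). -/
def APSA (n : ℕ) (S : Finset ℤ) : Prop :=
  ∃ w : Fin n → ℤ, IsSignedPerm n w ∧ (∀ i, 0 < w i) ∧ PinSet n w = ↑S

/-- `T` is an admissible pinnacle set of the totally ordered finite set `X ⊆ ℤ`: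
it is the pinnacle set of some arrangement of the elements of `X`. -/
def APSOn (X : Finset ℤ) (T : Finset ℤ) : Prop :=
  ∃ w : Fin X.card → ℤ, Function.Injective w ∧ (∀ i, w i ∈ X) ∧
    PinSet X.card w = ↑T


/-!
Pinnacles occupy pairwise non-adjacent interior positions, so a word of length `2k+1` has at
most `k` of them. Conversely, let `S` be the pinnacle set of a signed permutation with `|S| < k`.
Write the negatives of the absolute values missing from `S` in increasing order and insert the
elements of `S`, in increasing order, into the first `|S|` gaps. Each inserted value is a
pinnacle: for a negative pinnacle `s`, the right neighbours of the pinnacles `≤ s` together with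
the left neighbour of the leftmost one are `#{t ∈ S | t ≤ s} + 1` non-pinnacle entries below `s`
in the original permutation, so enough missing values lie below `s`. As `|S| < k`, the new word
ends with an ascent between two negative entries, and negating its last entry changes the parity
of the number of negative entries without changing the pinnacle set. So `S` is `D`-admissible.
-/

open Finset

structure IsPinnacleAt (n : ℕ) (f : ℕ → ℤ) (i : ℕ) : Prop where
  pos : 0 < i
  succ_lt : i + 1 < n
  left_lt : f (i - 1) < f i
  right_lt : f (i + 1) < f i

section Pinnacles

variable {n : ℕ} {f : ℕ → ℤ} {i : ℕ}

lemma isPinnacleAt_iff :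
    IsPinnacleAt n f i ↔ 0 < i ∧ i + 1 < n ∧ f (i - 1) < f i ∧ f (i + 1) < f i :=
  ⟨fun ⟨h0, h1, hl, hr⟩ => ⟨h0, h1, hl, hr⟩, fun ⟨h0, h1, hl, hr⟩ => ⟨h0, h1, hl, hr⟩⟩

instance : DecidablePred (IsPinnacleAt n f) := fun _ => decidable_of_iff' _ isPinnacleAt_iff

lemma IsPinnacleAt.lt_length (h : IsPinnacleAt n f i) : i < n := by
  have := h.succ_lt
  omega

lemma IsPinnacleAt.not_succ (h : IsPinnacleAt n f i) : ¬ IsPinnacleAt n f (i + 1) :=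
  fun h' => (h.right_lt.trans h'.left_lt).false

lemma IsPinnacleAt.not_pred (h : IsPinnacleAt n f i) : ¬ IsPinnacleAt n f (i - 1) :=
  fun h' => h'.not_succ (by rwa [Nat.sub_add_cancel h.pos])

def pinnaclePositions (n : ℕ) (f : ℕ → ℤ) : Finset ℕ :=
  (range n).filter (IsPinnacleAt n f)

lemma mem_pinnaclePositions : i ∈ pinnaclePositions n f ↔ IsPinnacleAt n f i := by
  simp only [pinnaclePositions, mem_filter, mem_range, and_iff_right_iff_imp]
  exact IsPinnacleAt.lt_length

lemma card_pinnaclePositions_le : #(pinnaclePositions n f) ≤ (n - 1) / 2 := by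
  have h := card_le_card_of_injOn (fun i => (i - 1) / 2) (t := range ((n - 1) / 2))
    (s := pinnaclePositions n f) ?_ ?_
  · simpa using h
  · intro i hi
    obtain ⟨h0, h2, -⟩ := mem_pinnaclePositions.1 hi
    simp only [coe_range, Set.mem_Iio]
    omega
  · intro i hi j hj hij
    simp only [mem_coe, mem_pinnaclePositions] at hi hj
    simp only at hij
    have := hi.pos
    have := hj.pos
    by_contra hne
    rcases (by omega : j = i + 1 ∨ i = j + 1) with rfl | rfl
    · exact hi.not_succ hj
    · exact hj.not_succ hi

lemma pinSet_eq_image : PinSet n (fun i : Fin n => f i) = ↑((pinnaclePositions n f).image f) := by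
  ext x
  simp only [PinSet, coe_image, Set.mem_image, mem_coe, mem_pinnaclePositions, isPinnacleAt_iff,
    Set.mem_ofPred_eq]
  constructor
  · rintro ⟨i, h0, h2, rfl, hl, hr⟩
    exact ⟨i, ⟨h0, h2, hl, hr⟩, rfl⟩
  · rintro ⟨i, ⟨h0, h2, hl, hr⟩, rfl⟩
    exact ⟨i, h0, h2, rfl, hl, hr⟩

end Pinnacles

lemma Fin.exists_eq_comp_val {α : Type*} [Inhabited α] {n : ℕ} (w : Fin n → α) :
    ∃ f : ℕ → α, w = fun i : Fin n => f i :=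
  ⟨fun i => if h : i < n then w ⟨i, h⟩ else default, funext fun i => by simp⟩

lemma isSignedPerm_iff {n : ℕ} {f : ℕ → ℤ} :
    IsSignedPerm n (fun i : Fin n => f i) ↔
      (∀ i < n, 1 ≤ |f i| ∧ |f i| ≤ n) ∧ Set.InjOn (fun i => |f i|) (Set.Iio n) := by
  constructor
  · rintro ⟨hbd, hinj⟩
    refine ⟨fun i hi => hbd ⟨i, hi⟩, fun i hi j hj hij => ?_⟩
    exact congrArg Fin.val (@hinj ⟨i, hi⟩ ⟨j, hj⟩ hij)
  · rintro ⟨hbd, hinj⟩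
    exact ⟨fun i => hbd i i.2, fun i j hij => Fin.ext (hinj i.2 j.2 hij)⟩

lemma card_filter_fin {n : ℕ} (p : ℕ → Prop) [DecidablePred p] :
    #{i : Fin n | p i} = #((range n).filter p) := by
  rw [← Nat.Iio_eq_range, ← Fin.map_valEmbedding_univ, filter_map, card_map]
  rfl

section SortedNth

variable {α : Type*} [LinearOrder α] [Inhabited α] (A : Finset α)

/-- The `j`-th smallest element of `A`, counting from `0` (junk value `default` once `#A ≤ j`). -/
noncomputable def sortedNth (j : ℕ) : α :=
  if h : j < #A then A.orderEmbOfFin rfl ⟨j, h⟩ else default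

lemma sortedNth_mem {j : ℕ} (hj : j < #A) : sortedNth A j ∈ A := by
  rw [sortedNth, dif_pos hj]
  exact orderEmbOfFin_mem ..

lemma sortedNth_strictMonoOn : StrictMonoOn (sortedNth A) (Set.Iio #A) := by
  intro i hi j hj hij
  rw [sortedNth, sortedNth, dif_pos (Set.mem_Iio.1 hi), dif_pos (Set.mem_Iio.1 hj)]
  exact (A.orderEmbOfFin rfl).strictMono hij

lemma exists_sortedNth_eq {x : α} (hx : x ∈ A) : ∃ j < #A, sortedNth A j = x := by
  rw [← mem_coe, ← range_orderEmbOfFin A rfl] at hx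
  obtain ⟨⟨j, hj⟩, rfl⟩ := hx
  exact ⟨j, hj, by rw [sortedNth, dif_pos hj]⟩

lemma image_range_sortedNth : (range #A).image (sortedNth A) = A := by
  ext x
  simp only [mem_image, mem_range]
  exact ⟨fun ⟨j, hj, hjx⟩ => hjx ▸ sortedNth_mem A hj, exists_sortedNth_eq A⟩

lemma le_card_filter_le_sortedNth {j : ℕ} (hj : j < #A) :
    j + 1 ≤ #{x ∈ A | x ≤ sortedNth A j} := by
  have hsub : (range (j + 1)).image (sortedNth A) ⊆ {x ∈ A | x ≤ sortedNth A j} := by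
    intro x hx
    obtain ⟨i, hi, rfl⟩ := mem_image.1 hx
    have hij : i ≤ j := Nat.lt_succ_iff.1 (mem_range.1 hi)
    exact mem_filter.2 ⟨sortedNth_mem A (hij.trans_lt hj),
      (sortedNth_strictMonoOn A).monotoneOn (hij.trans_lt hj) hj hij⟩
  have hinj : Set.InjOn (sortedNth A) (range (j + 1)) :=
    (sortedNth_strictMonoOn A).injOn.mono fun i hi => by simp at hi ⊢; omega
  simpa [card_image_of_injOn hinj] using card_le_card hsub

lemma sortedNth_lt_of_lt_card_filter {i : ℕ} {y : α} (h : i < #{x ∈ A | x < y}) :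
    sortedNth A i < y := by
  by_contra! hy
  have hsub : {x ∈ A | x < y} ⊆ (range i).image (sortedNth A) := by
    intro x hx
    obtain ⟨hxA, hxy⟩ := mem_filter.1 hx
    obtain ⟨j, hj, rfl⟩ := exists_sortedNth_eq A hxA
    refine mem_image.2 ⟨j, mem_range.2 ?_, rfl⟩
    by_contra! hij
    exact hxy.not_ge (hy.trans ((sortedNth_strictMonoOn A).monotoneOn (hij.trans_lt hj) hj hij))
  have := (card_le_card hsub).trans card_image_le
  simp only [card_range] at this
  omega

end SortedNth

open scoped Pointwise in
noncomputable def negComplement (n : ℕ) (S : Finset ℤ) : Finset ℤ :=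
  -(Icc (1 : ℤ) n \ S.image (|·|))

section NegComplement

variable {n : ℕ} {S : Finset ℤ}

lemma mem_negComplement {x : ℤ} :
    x ∈ negComplement n S ↔ 1 ≤ -x ∧ -x ≤ n ∧ ∀ t ∈ S, |t| ≠ -x := by
  simp only [negComplement, Finset.mem_neg, mem_sdiff, mem_Icc, mem_image, not_exists, not_and]
  constructor
  · rintro ⟨y, ⟨⟨h1, h2⟩, hy⟩, rfl⟩
    exact ⟨by simpa using h1, by simpa using h2, by simpa using hy⟩
  · rintro ⟨h1, h2, hx⟩
    exact ⟨-x, ⟨⟨h1, h2⟩, hx⟩, neg_neg x⟩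

lemma neg_of_mem_negComplement {x : ℤ} (hx : x ∈ negComplement n S) : x < 0 := by
  have := (mem_negComplement.1 hx).1
  omega

lemma abs_mem_Icc_of_mem_negComplement {x : ℤ} (hx : x ∈ negComplement n S) :
    1 ≤ |x| ∧ |x| ≤ n := by
  obtain ⟨h1, h2, -⟩ := mem_negComplement.1 hx
  rw [abs_of_neg (by omega)]
  exact ⟨h1, h2⟩

lemma card_negComplement (habs : Set.InjOn (|·|) (S : Set ℤ))
    (hbd : ∀ s ∈ S, 1 ≤ |s| ∧ |s| ≤ n) : #(negComplement n S) = n - #S := by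
  have hsub : S.image (|·|) ⊆ Icc (1 : ℤ) n := fun x hx => by
    obtain ⟨s, hs, rfl⟩ := mem_image.1 hx
    exact mem_Icc.2 (hbd s hs)
  rw [negComplement, card_neg, card_sdiff_of_subset hsub, card_image_of_injOn habs,
    Int.card_Icc]
  simp

end NegComplement

section SignedPerm

variable {n : ℕ} {f : ℕ → ℤ} {S : Finset ℤ}

lemma exists_pinnacle_of_mem (hS : (pinnaclePositions n f).image f = S) {t : ℤ} (ht : t ∈ S) :
    ∃ i, IsPinnacleAt n f i ∧ f i = t := by
  obtain ⟨i, hi, rfl⟩ := mem_image.1 (hS ▸ ht)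
  exact ⟨i, mem_pinnaclePositions.1 hi, rfl⟩

lemma abs_mem_Icc_of_pinnacles (hf : IsSignedPerm n (fun i : Fin n => f i))
    (hS : (pinnaclePositions n f).image f = S) {t : ℤ} (ht : t ∈ S) : 1 ≤ |t| ∧ |t| ≤ n := by
  obtain ⟨i, hi, rfl⟩ := exists_pinnacle_of_mem hS ht
  exact (isSignedPerm_iff.1 hf).1 i hi.lt_length

lemma injOn_abs_of_pinnacles (hf : IsSignedPerm n (fun i : Fin n => f i))
    (hS : (pinnaclePositions n f).image f = S) : Set.InjOn (|·|) (S : Set ℤ) := by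
  intro s hs t ht hst
  obtain ⟨i, hi, rfl⟩ := exists_pinnacle_of_mem hS hs
  obtain ⟨j, hj, rfl⟩ := exists_pinnacle_of_mem hS ht
  rw [(isSignedPerm_iff.1 hf).2 (Set.mem_Iio.2 hi.lt_length) (Set.mem_Iio.2 hj.lt_length) hst]

lemma mem_negComplement_of_not_isPinnacleAt (hf : IsSignedPerm n (fun i : Fin n => f i))
    (hS : (pinnaclePositions n f).image f = S) {i : ℕ} (hi : i < n)
    (hpin : ¬ IsPinnacleAt n f i) (hneg : f i < 0) : f i ∈ negComplement n S := by
  have hbd := (isSignedPerm_iff.1 hf).1 i hi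
  rw [abs_of_neg hneg] at hbd
  refine mem_negComplement.2 ⟨hbd.1, hbd.2, fun t ht hti => hpin ?_⟩
  obtain ⟨j, hj, rfl⟩ := exists_pinnacle_of_mem hS ht
  have hji : j = i := (isSignedPerm_iff.1 hf).2 (Set.mem_Iio.2 hj.lt_length)
    (Set.mem_Iio.2 hi) (by simpa [abs_of_neg hneg] using hti)
  exact hji ▸ hj

lemma card_filter_le_lt_card_filter_negComplement (hf : IsSignedPerm n (fun i : Fin n => f i))
    (hS : (pinnaclePositions n f).image f = S) {s : ℤ} (hs : s ∈ S) (hs0 : s < 0) :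
    #{t ∈ S | t ≤ s} < #{x ∈ negComplement n S | x < s} := by
  set P := {i ∈ pinnaclePositions n f | f i ≤ s}
  have hP : P.Nonempty := by
    obtain ⟨i, hi, rfl⟩ := exists_pinnacle_of_mem hS hs
    exact ⟨i, mem_filter.2 ⟨mem_pinnaclePositions.2 hi, le_rfl⟩⟩
  set q := P.min' hP
  -- right neighbours of the pinnacles in `P`, and the left neighbour of the leftmost one
  set R := insert (q - 1) (P.image (· + 1))
  have hSP : #{t ∈ S | t ≤ s} ≤ #P := by
    rw [← hS, filter_image]
    exact card_image_le
  have hR : #R = #P + 1 := by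
    refine (card_insert_of_notMem fun h => ?_).trans
      (by rw [card_image_of_injective _ (add_left_injective 1)])
    obtain ⟨p, hp, hpq⟩ := mem_image.1 h
    have := P.min'_le p hp
    omega
  have hRfacts : ∀ i ∈ R, i < n ∧ ¬ IsPinnacleAt n f i ∧ f i < s := by
    intro i hi
    rcases mem_insert.1 hi with rfl | hi
    · obtain ⟨hq, hqs⟩ := mem_filter.1 (P.min'_mem hP)
      have hq := mem_pinnaclePositions.1 hq
      exact ⟨by have := hq.lt_length; omega, hq.not_pred, hq.left_lt.trans_le hqs⟩
    · obtain ⟨p, hp, rfl⟩ := mem_image.1 hi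
      obtain ⟨hp, hps⟩ := mem_filter.1 hp
      have hp := mem_pinnaclePositions.1 hp
      exact ⟨hp.succ_lt, hp.not_succ, hp.right_lt.trans_le hps⟩
  have hinj : Set.InjOn f R := fun i hi j hj hij =>
    (isSignedPerm_iff.1 hf).2 (Set.mem_Iio.2 (hRfacts i hi).1) (Set.mem_Iio.2 (hRfacts j hj).1)
      (congrArg abs hij)
  calc #{t ∈ S | t ≤ s} < #R := by omega
    _ ≤ #{x ∈ negComplement n S | x < s} := by
      refine card_le_card_of_injOn f (fun i hi => ?_) hinj
      obtain ⟨hin, hpin, his⟩ := hRfacts i hi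
      exact mem_filter.2 ⟨mem_negComplement_of_not_isPinnacleAt hf hS hin hpin (his.trans hs0), his⟩

end SignedPerm

/-- The word `c 0, s 0, c 1, s 1, …, c (m-1), s (m-1), c m, c (m+1), …`. -/
def interleave (s c : ℕ → ℤ) (m i : ℕ) : ℤ :=
  if i % 2 = 1 ∧ i < 2 * m then s (i / 2) else c (if i < 2 * m then i / 2 else i - m)

section Interleave

variable {s c : ℕ → ℤ} {m N : ℕ}

lemma interleave_two_mul_add_one {j : ℕ} (hj : j < m) : interleave s c m (2 * j + 1) = s j := by
  rw [interleave, if_pos ⟨by omega, by omega⟩]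
  congr 1
  omega

lemma interleave_two_mul {j : ℕ} (hj : j ≤ m) : interleave s c m (2 * j) = c j := by
  rw [interleave, if_neg (by omega)]
  split_ifs <;> congr 1 <;> omega

lemma interleave_add {j : ℕ} (hj : m ≤ j) : interleave s c m (j + m) = c j := by
  rw [interleave, if_neg (by omega), if_neg (by omega), Nat.add_sub_cancel]

lemma interleave_lt_succ (hc : StrictMonoOn c (Set.Iio N)) (hcs : ∀ j < m, c (j + 1) < s j)
    (hmN : m < N) {i : ℕ} (hi : ¬ (i % 2 = 1 ∧ i < 2 * m)) (hiN : i + 1 < m + N) :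
    interleave s c m i < interleave s c m (i + 1) := by
  by_cases him : i < 2 * m
  · obtain ⟨j, rfl⟩ : ∃ j, i = 2 * j := ⟨i / 2, by omega⟩
    rw [interleave_two_mul (by omega), interleave_two_mul_add_one (by omega)]
    exact (hc (Set.mem_Iio.2 (by omega)) (Set.mem_Iio.2 (by omega)) (Nat.lt_succ_self j)).trans
      (hcs j (by omega))
  · obtain ⟨j, rfl⟩ : ∃ j, i = j + m := ⟨i - m, by omega⟩
    rw [interleave_add (by omega), add_right_comm, interleave_add (by omega)]
    exact hc (Set.mem_Iio.2 (by omega)) (Set.mem_Iio.2 (by omega)) (Nat.lt_succ_self j)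

lemma isPinnacleAt_interleave_iff (hc : StrictMonoOn c (Set.Iio N))
    (hcs : ∀ j < m, c (j + 1) < s j) (hmN : m < N) {i : ℕ} :
    IsPinnacleAt (m + N) (interleave s c m) i ↔ i % 2 = 1 ∧ i < 2 * m := by
  constructor
  · intro hp
    by_contra hi
    exact (interleave_lt_succ hc hcs hmN hi hp.succ_lt).not_gt hp.right_lt
  · rintro hi
    obtain ⟨j, rfl⟩ : ∃ j, i = 2 * j + 1 := ⟨i / 2, by omega⟩
    have hcsj := hcs j (by omega)
    refine ⟨by omega, by omega, ?_, ?_⟩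
    · rw [Nat.add_sub_cancel, interleave_two_mul (by omega), interleave_two_mul_add_one (by omega)]
      exact (hc (Set.mem_Iio.2 (by omega)) (Set.mem_Iio.2 (by omega)) (Nat.lt_succ_self j)).trans
        hcsj
    · rw [show 2 * j + 1 + 1 = 2 * (j + 1) by ring, interleave_two_mul (by omega),
        interleave_two_mul_add_one (by omega)]
      exact hcsj

lemma image_pinnaclePositions_interleave (hc : StrictMonoOn c (Set.Iio N))
    (hcs : ∀ j < m, c (j + 1) < s j) (hmN : m < N) :
    (pinnaclePositions (m + N) (interleave s c m)).image (interleave s c m) = (range m).image s := by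
  ext x
  simp only [mem_image, mem_pinnaclePositions, isPinnacleAt_interleave_iff hc hcs hmN, mem_range]
  constructor
  · rintro ⟨i, hi, rfl⟩
    obtain ⟨j, rfl⟩ : ∃ j, i = 2 * j + 1 := ⟨i / 2, by omega⟩
    exact ⟨j, by omega, (interleave_two_mul_add_one (by omega)).symm⟩
  · rintro ⟨j, hj, rfl⟩
    exact ⟨2 * j + 1, by omega, interleave_two_mul_add_one hj⟩

lemma isSignedPerm_interleave (hmN : m ≤ N)
    (hs : ∀ j < m, 1 ≤ |s j| ∧ |s j| ≤ m + N) (hc : ∀ j < N, 1 ≤ |c j| ∧ |c j| ≤ m + N)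
    (hsurj : ∀ b : ℤ, 1 ≤ b → b ≤ m + N → (∃ j < m, |s j| = b) ∨ (∃ j < N, |c j| = b)) :
    IsSignedPerm (m + N) (fun i : Fin (m + N) => interleave s c m i) := by
  have hbd : ∀ i < m + N, 1 ≤ |interleave s c m i| ∧ |interleave s c m i| ≤ m + N := by
    intro i hi
    by_cases h : i % 2 = 1 ∧ i < 2 * m
    · rw [interleave, if_pos h]
      exact hs _ (by omega)
    · rw [interleave, if_neg h]
      exact hc _ (by split_ifs <;> omega)
  have hsurj' : Set.SurjOn (fun i => |interleave s c m i|) (range (m + N))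
      (Icc (1 : ℤ) (m + N)) := by
    intro b hb
    rw [coe_Icc, Set.mem_Icc] at hb
    rcases hsurj b hb.1 (by exact_mod_cast hb.2) with ⟨j, hj, rfl⟩ | ⟨j, hj, rfl⟩
    · exact ⟨2 * j + 1, by simp; omega, by simp only [interleave_two_mul_add_one hj]⟩
    · by_cases hjm : j < m
      · exact ⟨2 * j, by simp; omega, by simp only [interleave_two_mul hjm.le]⟩
      · exact ⟨j + m, by simp; omega, by simp only [interleave_add (not_lt.1 hjm)]⟩
  have hmaps : Set.MapsTo (fun i => |interleave s c m i|) (range (m + N))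
      (Icc (1 : ℤ) (m + N)) := fun i hi => by
    simpa using hbd i (by simpa using hi)
  refine isSignedPerm_iff.2 ⟨hbd, ?_⟩
  simpa using injOn_of_surjOn_of_card_le _ hmaps hsurj' (by simp; omega)

end Interleave

lemma apsD_of_isSignedPerm {n : ℕ} {f : ℕ → ℤ} {S : Finset ℤ}
    (hf : IsSignedPerm n (fun i : Fin n => f i)) (hS : (pinnaclePositions n f).image f = S)
    (heven : Even #{i ∈ range n | f i < 0}) : APSD n S :=
  ⟨_, hf, by rwa [card_filter_fin (fun i => f i < 0)], by rw [pinSet_eq_image, hS]⟩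

lemma apsD_of_lt_last {n : ℕ} {f : ℕ → ℤ} {S : Finset ℤ}
    (hf : IsSignedPerm n (fun i : Fin n => f i)) (hS : (pinnaclePositions n f).image f = S)
    (hlt : f (n - 2) < f (n - 1)) (hneg : f (n - 1) < 0) : APSD n S := by
  have hn : 2 ≤ n := by
    by_contra hn
    rw [show n - 2 = n - 1 by omega] at hlt
    exact hlt.false
  by_cases heven : Even #{i ∈ range n | f i < 0}
  · exact apsD_of_isSignedPerm hf hS heven
  set g := Function.update f (n - 1) (-f (n - 1))
  have hgf : ∀ i, i ≠ n - 1 → g i = f i := fun i hi => Function.update_of_ne hi _ _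
  have hg_last : g (n - 1) = -f (n - 1) := Function.update_self _ _ _
  have hpin : ∀ i, IsPinnacleAt n g i ↔ IsPinnacleAt n f i := by
    intro i
    by_cases hi : i + 2 = n
    · obtain rfl : i = n - 2 := by omega
      have hg_pen : g (n - 2) = f (n - 2) := hgf _ (by omega)
      simp only [isPinnacleAt_iff, show n - 2 + 1 = n - 1 by omega, hg_pen, hg_last]
      constructor <;> rintro ⟨-, -, -, h⟩ <;> linarith
    · simp only [isPinnacleAt_iff]
      constructor <;> rintro ⟨h0, h1, h⟩ <;>
        simpa [h0, h1, hgf (i - 1) (by omega), hgf i (by omega), hgf (i + 1) (by omega)] using h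
  have habs : ∀ i, |g i| = |f i| := by
    intro i
    by_cases hi : i = n - 1
    · rw [hi, hg_last, abs_neg]
    · rw [hgf i hi]
  have hneg_g : {i ∈ range n | g i < 0} = {i ∈ range n | f i < 0}.erase (n - 1) := by
    ext i
    by_cases hi : i = n - 1
    · simp [hi, hg_last, hneg.le]
    · simp [hi, hgf i hi]
  refine apsD_of_isSignedPerm (f := g) ?_ ?_ ?_
  · simpa only [isSignedPerm_iff, habs] using hf
  · rw [show pinnaclePositions n g = pinnaclePositions n f from filter_congr fun i _ => hpin i,
      ← hS]
    exact image_congr fun i hi => hgf i (by have := (mem_pinnaclePositions.1 hi).succ_lt; omega)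
  · rw [hneg_g, card_erase_of_mem (mem_filter.2 ⟨mem_range.2 (by omega), hneg⟩)]
    exact Nat.Odd.sub_odd (Nat.not_even_iff_odd.1 heven) odd_one

theorem apsD_of_two_mul_card_add_one_lt {n : ℕ} {S : Finset ℤ} (hn : 2 * #S + 1 < n)
    (habs : Set.InjOn (|·|) (S : Set ℤ)) (hbd : ∀ s ∈ S, 1 ≤ |s| ∧ |s| ≤ n)
    (hcount : ∀ s ∈ S, s < 0 → #{t ∈ S | t ≤ s} < #{x ∈ negComplement n S | x < s}) :
    APSD n S := by
  set C := negComplement n S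
  have hnC : n = #S + #C := by rw [card_negComplement habs hbd]; omega
  have hnC' : (n : ℤ) = #S + #C := by exact_mod_cast hnC
  have hC := sortedNth_strictMonoOn C
  have hcs : ∀ j < #S, sortedNth C (j + 1) < sortedNth S j := by
    intro j hj
    rcases lt_or_ge (sortedNth S j) 0 with hneg | hnn
    · exact sortedNth_lt_of_lt_card_filter C
        ((le_card_filter_le_sortedNth S hj).trans_lt (hcount _ (sortedNth_mem S hj) hneg))
    · exact (neg_of_mem_negComplement (sortedNth_mem C (by omega))).trans_le hnn
  have hsurj : ∀ b : ℤ, 1 ≤ b → b ≤ n →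
      (∃ j < #S, |sortedNth S j| = b) ∨ (∃ j < #C, |sortedNth C j| = b) := by
    intro b hb1 hb2
    by_cases h : ∃ t ∈ S, |t| = b
    · obtain ⟨t, ht, rfl⟩ := h
      obtain ⟨j, hj, rfl⟩ := exists_sortedNth_eq S ht
      exact Or.inl ⟨j, hj, rfl⟩
    · push Not at h
      have hb : -b ∈ C := mem_negComplement.2 ⟨by simpa, by simpa, fun t ht => by simpa using h t ht⟩
      obtain ⟨j, hj, hjb⟩ := exists_sortedNth_eq C hb
      exact Or.inr ⟨j, hj, by rw [hjb, abs_neg, abs_of_pos (by omega)]⟩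
  rw [hnC]
  refine apsD_of_lt_last (f := interleave (sortedNth S) (sortedNth C) #S) ?_ ?_ ?_ ?_
  · refine isSignedPerm_interleave (by omega) (fun j hj => hnC' ▸ hbd _ (sortedNth_mem S hj))
      (fun j hj => hnC' ▸ abs_mem_Icc_of_mem_negComplement (sortedNth_mem C hj))
      (fun b hb1 hb2 => hsurj b hb1 (hnC' ▸ hb2))
  · rw [image_pinnaclePositions_interleave hC hcs (by omega), image_range_sortedNth]
  · have := interleave_lt_succ hC hcs (i := #S + #C - 2) (by omega) (by omega) (by omega)
    rwa [show #S + #C - 2 + 1 = #S + #C - 1 by omega] at this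
  · rw [show #S + #C - 1 = (#C - 1) + #S by omega, interleave_add (by omega)]
    exact neg_of_mem_negComplement (sortedNth_mem C (by omega))

theorem stmt11 (k : ℕ) (S : Finset ℤ) (h1 : APSB (2 * k + 1) S)
    (h2 : ¬ APSD (2 * k + 1) S) : S.card = k := by
  obtain ⟨w, hw, hpin⟩ := h1
  obtain ⟨f, rfl⟩ := Fin.exists_eq_comp_val w
  have hS : (pinnaclePositions (2 * k + 1) f).image f = S := by
    rw [pinSet_eq_image] at hpin
    exact_mod_cast hpin
  have hle : #S ≤ k := by
    have := hS ▸ card_image_le.trans card_pinnaclePositions_le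
    simpa using this
  by_contra hne
  exact h2 (apsD_of_two_mul_card_add_one_lt (by omega) (injOn_abs_of_pinnacles hw hS)
    (fun t ht => abs_mem_Icc_of_pinnacles hw hS ht)
    (fun s hs hs0 => card_filter_le_lt_card_filter_negComplement hw hS hs hs0))
end

section
/- Let S be an admissible pinnacle set of B_{2k+1} that is not admissible in D_{2k+1}. Then in every signed permutation of rank 2k+1 whose pinnacle set equals S, all non-pinnacle values are negative. -/
/-!
Let `w` have pinnacle set `S` and a positive non-pinnacle value `p`. Counting neighbours of
pinnacles, below each pinnacle `s` there are at least two more non-pinnacle values than pinnacle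
values. Replace every non-pinnacle value `v ≠ p` by `-|v|` and `p` by `±p`, the sign chosen to make
the number of negative values even. Negative values are kept and only `p` can be nonnegative
afterwards, so the number of non-pinnacle values below any threshold does not drop. That count
condition is exactly what makes the zigzag word `u₀ s₀ u₁ s₁ ⋯ u_{d-1} s_{d-1} u_d ⋯` (pinnacles
`sⱼ` and new non-pinnacle values `uⱼ`, each row increasing) have pinnacle set `S`, and this word
lies in `D_n`.
-/

open Finset Function

theorem card_filter_le_eq_card_filter_lt_add_one {α : Type*} [LinearOrder α] {S : Finset α}
    {s : α} (hs : s ∈ S) :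
    #(S.filter (· ≤ s)) = #(S.filter (· < s)) + 1 := by
  have : S.filter (· ≤ s) = insert s (S.filter (· < s)) := by
    ext x
    simp only [mem_filter, mem_insert, le_iff_lt_or_eq]
    constructor
    · rintro ⟨hx, hlt | rfl⟩ <;> simp_all
    · rintro (rfl | ⟨hx, hlt⟩) <;> simp_all
  rw [this, card_insert_of_notMem (by simp)]

theorem card_filter_lt_le_card_filter_lt {α : Type*} [LinearOrder α] {V U : Finset α} {a : α}
    (hcard : #V ≤ #U) (hlow : ∀ v ∈ V, v < a → v ∈ U) (hhigh : ∀ u ∈ U, a ≤ u → u ∈ V)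
    (s : α) : #(V.filter (· < s)) ≤ #(U.filter (· < s)) := by
  rcases le_or_gt s a with hs | hs
  · exact card_le_card fun v hv => by
      rw [mem_filter] at hv ⊢
      exact ⟨hlow v hv.1 (hv.2.trans_le hs), hv.2⟩
  · have hsub : U.filter (¬ · < s) ⊆ V.filter (¬ · < s) := fun u hu => by
      rw [mem_filter, not_lt] at hu ⊢
      exact ⟨hhigh u hu.1 (hs.le.trans hu.2), hu.2⟩
    have := card_le_card hsub
    have := card_filter_add_card_filter_not (s := V) (· < s)
    have := card_filter_add_card_filter_not (s := U) (· < s)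
    omega

namespace PinSet

variable {n : ℕ}

-- Positions are natural numbers so that the neighbours `q ± 1` need no bound proofs.
def entry (w : Fin n → ℤ) (q : ℕ) : ℤ := if h : q < n then w ⟨q, h⟩ else 0

theorem entry_of_lt (w : Fin n → ℤ) {q : ℕ} (h : q < n) : entry w q = w ⟨q, h⟩ := dif_pos h

def IsPinnacleAt (w : Fin n → ℤ) (q : ℕ) : Prop :=
  0 < q ∧ q + 1 < n ∧ entry w (q - 1) < entry w q ∧ entry w (q + 1) < entry w q

theorem mem_pinSet_iff {w : Fin n → ℤ} {x : ℤ} :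
    x ∈ PinSet n w ↔ ∃ q, IsPinnacleAt w q ∧ entry w q = x := by
  constructor
  · rintro ⟨q, h0, h2, hx, hl, hr⟩
    refine ⟨q, ⟨h0, h2, ?_, ?_⟩, ?_⟩ <;>
      simpa only [entry_of_lt w (by omega : q < n), entry_of_lt w (by omega : q - 1 < n),
        entry_of_lt w h2]
  · rintro ⟨q, ⟨h0, h2, hl, hr⟩, rfl⟩
    rw [entry_of_lt w (by omega : q < n), entry_of_lt w (by omega : q - 1 < n),
      entry_of_lt w h2] at *
    exact ⟨q, h0, h2, rfl, hl, hr⟩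

theorem entry_injOn {w : Fin n → ℤ} (hw : Injective w) : Set.InjOn (entry w) (Set.Iio n) :=
  fun q hq r hr h => by
    rw [entry_of_lt w hq, entry_of_lt w hr] at h
    exact Fin.mk.inj_iff.mp (hw h)

theorem isPinnacleAt_of_entry_mem {w : Fin n → ℤ} (hw : Injective w) {S : Finset ℤ}
    (hS : PinSet n w = S) {q : ℕ} (hq : q < n) (h : entry w q ∈ S) : IsPinnacleAt w q := by
  obtain ⟨r, hr, hrq⟩ := mem_pinSet_iff.mp (hS ▸ h : entry w q ∈ PinSet n w)
  rwa [← entry_injOn hw (by simp [hr.2.1.trans' (Nat.lt_succ_self r)] : r ∈ Set.Iio n) hq hrq]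

theorem IsPinnacleAt.not_succ {w : Fin n → ℤ} {q : ℕ} (h : IsPinnacleAt w q) :
    ¬ IsPinnacleAt w (q + 1) := fun h' => by
  have := h'.2.2.1
  simp only [Nat.add_sub_cancel] at this
  exact lt_asymm h.2.2.2 this

theorem IsPinnacleAt.not_pred {w : Fin n → ℤ} {q : ℕ} (h : IsPinnacleAt w q) :
    ¬ IsPinnacleAt w (q - 1) := fun h' => by
  have := h'.2.2.2
  rw [Nat.sub_add_cancel h.1] at this
  exact lt_asymm h.2.2.1 this

theorem entry_mem_image (w : Fin n → ℤ) {q : ℕ} (h : q < n) : entry w q ∈ univ.image w := by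
  rw [entry_of_lt w h]
  exact mem_image_of_mem w (mem_univ _)

theorem card_filter_entry_mem_le {w : Fin n → ℤ} (hw : Injective w) {S : Finset ℤ}
    (hS : PinSet n w = S) {s : ℤ} (hs : s ∈ S) :
    #((range n).filter (fun q => entry w q ∈ S ∧ entry w q ≤ s)) = #(S.filter (· < s)) + 1 := by
  have himage : ((range n).filter (fun q => entry w q ∈ S ∧ entry w q ≤ s)).image (entry w) =
      S.filter (· ≤ s) := by
    ext x
    simp only [mem_image, mem_filter, mem_range]
    constructor
    · rintro ⟨q, ⟨-, hq, hqs⟩, rfl⟩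
      exact ⟨hq, hqs⟩
    · rintro ⟨hx, hxs⟩
      obtain ⟨q, hq, rfl⟩ := mem_pinSet_iff.mp (by rw [hS]; exact hx)
      exact ⟨q, ⟨by have := hq.2.1; omega, hx, hxs⟩, rfl⟩
  rw [← card_filter_le_eq_card_filter_lt_add_one hs, ← himage, card_image_of_injOn]
  exact (entry_injOn hw).mono fun q hq => (mem_range.mp (mem_filter.mp hq).1)

/-- The witnesses are the right neighbours of the pinnacles `≤ s` and the left neighbour of the
leftmost one. -/
theorem card_filter_lt_add_two_le {w : Fin n → ℤ} (hw : Injective w) {S : Finset ℤ}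
    (hS : PinSet n w = S) {s : ℤ} (hs : s ∈ S) :
    #(S.filter (· < s)) + 2 ≤ #((univ.image w \ S).filter (· < s)) := by
  set P := (range n).filter (fun q => entry w q ∈ S ∧ entry w q ≤ s)
  have hP : ∀ q ∈ P, IsPinnacleAt w q ∧ entry w q ≤ s := fun q hq => by
    simp only [P, mem_filter, mem_range] at hq
    exact ⟨isPinnacleAt_of_entry_mem hw hS hq.1 hq.2.1, hq.2.2⟩
  have hPne : P.Nonempty := card_pos.mp (by rw [card_filter_entry_mem_le hw hS hs]; omega)
  set q₀ := P.min' hPne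
  have hq₀ := hP q₀ (P.min'_mem hPne)
  set N := insert (q₀ - 1) (P.image (· + 1))
  have hNcard : #N = #P + 1 := by
    rw [card_insert_of_notMem, card_image_of_injective _ (add_left_injective 1)]
    simp only [mem_image, not_exists, not_and]
    intro q hq hq'
    have := P.min'_le q hq
    have := hq₀.1.1
    omega
  have hN : ∀ r ∈ N, r < n ∧ ¬ IsPinnacleAt w r ∧ entry w r < s := by
    intro r hr
    rcases mem_insert.mp hr with rfl | hr
    · exact ⟨by have := hq₀.1.2.1; omega, hq₀.1.not_pred, hq₀.1.2.2.1.trans_le hq₀.2⟩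
    · obtain ⟨q, hq, rfl⟩ := mem_image.mp hr
      obtain ⟨hqpin, hqs⟩ := hP q hq
      exact ⟨hqpin.2.1, hqpin.not_succ, hqpin.2.2.2.trans_le hqs⟩
  calc #(S.filter (· < s)) + 2 = #N := by rw [hNcard, card_filter_entry_mem_le hw hS hs]
    _ ≤ #((univ.image w \ S).filter (· < s)) := by
      refine card_le_card_of_injOn (entry w) (fun r hr => ?_)
        ((entry_injOn hw).mono fun r hr => (hN r hr).1)
      obtain ⟨hrn, hrpin, hrs⟩ := hN r hr
      simp only [mem_coe, mem_filter, mem_sdiff]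
      exact ⟨⟨entry_mem_image w hrn, fun h => hrpin (isPinnacleAt_of_entry_mem hw hS hrn h)⟩, hrs⟩

theorem entry_cons_cons (a b : ℤ) (w : Fin (n + 1) → ℤ) (q : ℕ) :
    entry (Fin.cons a (Fin.cons b w) : Fin (n + 3) → ℤ) (q + 2) = entry w q := by
  unfold entry
  by_cases h : q < n + 1
  · rw [dif_pos (by omega), dif_pos h]; rfl
  · rw [dif_neg (by omega), dif_neg h]

theorem isPinnacleAt_cons_cons_iff (a b : ℤ) (w : Fin (n + 1) → ℤ) {q : ℕ} (hq : 0 < q) :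
    IsPinnacleAt (Fin.cons a (Fin.cons b w) : Fin (n + 3) → ℤ) (q + 2) ↔ IsPinnacleAt w q := by
  obtain ⟨r, rfl⟩ : ∃ r, q = r + 1 := ⟨q - 1, by omega⟩
  simp only [IsPinnacleAt, Nat.add_sub_cancel, show r + 1 + 2 - 1 = r + 2 by omega,
    show r + 1 + 2 + 1 = r + 2 + 2 by omega, entry_cons_cons]
  constructor <;> rintro ⟨-, h, hl, hr⟩ <;> exact ⟨by omega, by omega, hl, hr⟩

theorem pinSet_cons_cons {a b : ℤ} {w : Fin (n + 1) → ℤ} (hab : a < b) (hb : w 0 < b) :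
    PinSet (n + 3) (Fin.cons a (Fin.cons b w) : Fin (n + 3) → ℤ) = insert b (PinSet (n + 1) w) := by
  ext x
  rw [Set.mem_insert_iff, mem_pinSet_iff, mem_pinSet_iff]
  constructor
  · rintro ⟨q, hq, rfl⟩
    match q, hq with
    | 0, hq => exact absurd hq.1 (lt_irrefl 0)
    | 1, _ => exact Or.inl rfl
    | 2, hq => exact absurd hq.2.2.1 (not_lt.mpr hb.le)
    | r + 3, hq =>
      exact Or.inr ⟨r + 1, (isPinnacleAt_cons_cons_iff a b w r.succ_pos).mp hq,
        (entry_cons_cons a b w (r + 1)).symm⟩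
  · rintro (rfl | ⟨q, hq, rfl⟩)
    · exact ⟨1, ⟨one_pos, by omega, hab, hb⟩, rfl⟩
    · exact ⟨q + 2, (isPinnacleAt_cons_cons_iff a b w hq.1).mpr hq, entry_cons_cons a b w q⟩

theorem pinSet_eq_empty_of_strictMono {w : Fin n → ℤ} (hw : StrictMono w) : PinSet n w = ∅ := by
  ext x
  simp only [Set.mem_empty_iff_false, iff_false]
  rintro ⟨q, -, h2, -, -, hr⟩
  exact lt_asymm hr (hw (Fin.mk_lt_mk.mpr q.lt_succ_self))

theorem cons_cons_arrangement {m : ℕ} {X T : Finset ℤ} {w : Fin (m + 1) → ℤ} (hw : Injective w)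
    (hmem : ∀ i, w i ∈ X) (hpin : PinSet (m + 1) w = T) (hmin : ∀ x ∈ X, w 0 ≤ x) {a b : ℤ}
    (ha : ∀ x ∈ insert b X, a < x) (hbX : b ∉ X) (hb : ∃ x ∈ X, x < b) :
    Injective (Fin.cons a (Fin.cons b w) : Fin (m + 3) → ℤ) ∧
      (∀ i, (Fin.cons a (Fin.cons b w) : Fin (m + 3) → ℤ) i ∈ insert a (insert b X)) ∧
      PinSet (m + 3) (Fin.cons a (Fin.cons b w)) = insert b T ∧
      ∀ x ∈ insert a (insert b X), (Fin.cons a (Fin.cons b w) : Fin (m + 3) → ℤ) 0 ≤ x := by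
  have hab : a < b := ha b (mem_insert_self b X)
  have haX : a ∉ X := fun h => lt_irrefl a (ha a (mem_insert_of_mem h))
  obtain ⟨x, hx, hxb⟩ := hb
  refine ⟨?_, ?_, ?_, ?_⟩
  · refine Fin.cons_injective_iff.mpr ⟨?_, Fin.cons_injective_iff.mpr ⟨?_, hw⟩⟩
    · rw [Fin.range_cons]
      rintro (h | ⟨j, hj⟩)
      · exact hab.ne h
      · exact haX (hj ▸ hmem j)
    · rintro ⟨j, hj⟩
      exact hbX (hj ▸ hmem j)
  · exact Fin.cases (mem_insert_self a _)
      (Fin.cases (mem_insert_of_mem (mem_insert_self b X))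
        fun j => mem_insert_of_mem (mem_insert_of_mem (hmem j)))
  · rw [pinSet_cons_cons hab ((hmin x hx).trans_lt hxb), hpin, coe_insert]
  · intro y hy
    rcases mem_insert.mp hy with rfl | hy
    · exact le_rfl
    · exact (ha y hy).le

theorem card_filter_lt_add_two_le_erase_min {a : ℤ} {s U : Finset ℤ} (has : ∀ x ∈ s, a < x)
    (hcount : ∀ x ∈ insert a s, #((insert a s).filter (· < x)) + 2 ≤ #(U.filter (· < x))) :
    ∃ hU : U.Nonempty, U.min' hU < a ∧ (∃ u ∈ U.erase (U.min' hU), u < a) ∧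
      ∀ x ∈ s, #(s.filter (· < x)) + 2 ≤ #((U.erase (U.min' hU)).filter (· < x)) := by
  have ha : a ∉ s := fun h => lt_irrefl a (has a h)
  have hUa : 2 ≤ #(U.filter (· < a)) := by
    have h := hcount a (mem_insert_self a s)
    rwa [filter_eq_empty_iff.mpr (by simpa using fun x hx => (has x hx).le), card_empty] at h
  have hUne : U.Nonempty := nonempty_of_ne_empty (by rintro rfl; simp at hUa)
  have hu₀a : U.min' hUne < a := by
    obtain ⟨u, hu⟩ : (U.filter (· < a)).Nonempty := card_pos.mp (by omega)
    exact (U.min'_le u (mem_filter.mp hu).1).trans_lt (mem_filter.mp hu).2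
  have hfilter : ∀ x, U.min' hUne < x →
      #((U.erase (U.min' hUne)).filter (· < x)) + 1 = #(U.filter (· < x)) := fun x hx => by
    rw [filter_erase, card_erase_add_one (mem_filter.mpr ⟨U.min'_mem hUne, hx⟩)]
  refine ⟨hUne, hu₀a, ?_, fun x hx => ?_⟩
  · obtain ⟨u, hu⟩ : ((U.erase (U.min' hUne)).filter (· < a)).Nonempty :=
      card_pos.mp (by have := hfilter a hu₀a; omega)
    exact ⟨u, (mem_filter.mp hu).1, (mem_filter.mp hu).2⟩
  · have h := hcount x (mem_insert_of_mem hx)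
    rw [filter_insert, if_pos (has x hx), card_insert_of_notMem (fun h => ha (mem_filter.mp h).1),
      ← hfilter x (hu₀a.trans (has x hx))] at h
    omega

/-- The zigzag word `u₀ s₀ u₁ s₁ ⋯ u_{d-1} s_{d-1} u_d ⋯ u_{m-1}` (both rows increasing), built by
peeling off the smallest pinnacle `s₀` and the smallest other value `u₀`. -/
theorem exists_zigzag (S : Finset ℤ) : ∀ (U : Finset ℤ) (n : ℕ), Disjoint S U →
    (∀ s ∈ S, #(S.filter (· < s)) + 2 ≤ #(U.filter (· < s))) → #(S ∪ U) = n →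
    ∃ w : Fin n → ℤ, Injective w ∧ (∀ i, w i ∈ S ∪ U) ∧ PinSet n w = S ∧
      ∀ (h : 0 < n), ∀ x ∈ S ∪ U, w ⟨0, h⟩ ≤ x := by
  induction S using Finset.induction_on_min with
  | empty =>
    intro U n _ _ hn
    rw [empty_union] at hn ⊢
    refine ⟨U.orderEmbOfFin hn, (U.orderEmbOfFin hn).injective, U.orderEmbOfFin_mem hn,
      by simpa using pinSet_eq_empty_of_strictMono (U.orderEmbOfFin hn).strictMono,
      fun h x hx => ?_⟩
    obtain ⟨j, rfl⟩ : x ∈ Set.range (U.orderEmbOfFin hn) := by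
      rwa [range_orderEmbOfFin]
    exact (U.orderEmbOfFin hn).monotone (Fin.le_def.mpr (Nat.zero_le _))
  | insert a s has ih =>
    intro U n hSU hcount hn
    obtain ⟨hUne, hu₀a, ⟨u, hu, hua⟩, hcount'⟩ := card_filter_lt_add_two_le_erase_min has hcount
    set u₀ := U.min' hUne
    set U' := U.erase u₀
    have hsU' : Disjoint s U' :=
      (disjoint_of_subset_left (subset_insert a s) hSU).mono_right (erase_subset u₀ U)
    have haU' : a ∉ s ∪ U' := fun h => (mem_union.mp h).elim (fun h => lt_irrefl a (has a h))
      fun h => disjoint_left.mp hSU (mem_insert_self a s) (mem_of_mem_erase h)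
    have hu₀ : ∀ x ∈ insert a (s ∪ U'), u₀ < x := by
      intro x hx
      rcases mem_insert.mp hx with rfl | hx
      · exact hu₀a
      rcases mem_union.mp hx with hx | hx
      · exact hu₀a.trans (has x hx)
      · exact lt_of_le_of_ne (U.min'_le x (mem_of_mem_erase hx)) (ne_of_mem_erase hx).symm
    have hunion : insert a s ∪ U = insert u₀ (insert a (s ∪ U')) := by
      rw [insert_union, ← insert_erase (U.min'_mem hUne), union_insert, insert_comm]
    obtain ⟨m, hm⟩ : ∃ m, #(s ∪ U') = m + 1 :=
      ⟨#(s ∪ U') - 1, by have := card_pos.mpr ⟨u, mem_union_right s hu⟩; omega⟩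
    obtain rfl : n = m + 3 := by
      rw [← hn, hunion, card_insert_of_notMem fun h => lt_irrefl _ (hu₀ u₀ h),
        card_insert_of_notMem haU', hm]
    obtain ⟨w, hw, hwmem, hwpin, hwmin⟩ := ih U' (m + 1) hsU' hcount' hm
    obtain ⟨hv, hvmem, hvpin, hvmin⟩ := cons_cons_arrangement hw hwmem hwpin (hwmin m.succ_pos)
      hu₀ haU' ⟨u, mem_union_right s hu, hua⟩
    exact ⟨_, hv, hunion ▸ hvmem, hvpin, fun _ => hunion ▸ hvmin⟩

end PinSet

theorem apsOn_union {S U : Finset ℤ} (hSU : Disjoint S U)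
    (hcount : ∀ s ∈ S, #(S.filter (· < s)) + 2 ≤ #(U.filter (· < s))) : APSOn (S ∪ U) S := by
  obtain ⟨w, hw, hmem, hpin, -⟩ := PinSet.exists_zigzag S U _ hSU hcount rfl
  exact ⟨w, hw, hmem, hpin⟩

theorem apsD_of_apsOn {n : ℕ} {X T : Finset ℤ} (h : APSOn X T)
    (hbound : ∀ x ∈ X, 1 ≤ |x| ∧ |x| ≤ n) (habs : Set.InjOn (|·|) (X : Set ℤ)) (hcard : #X = n)
    (heven : Even #(X.filter (· < 0))) : APSD n T := by
  subst hcard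
  obtain ⟨w, hw, hmem, hpin⟩ := h
  have himage : univ.image w = X :=
    eq_of_subset_of_card_le (fun x hx => by obtain ⟨i, -, rfl⟩ := mem_image.mp hx; exact hmem i)
      (by rw [card_image_of_injective _ hw, card_univ, Fintype.card_fin])
  refine ⟨w, ⟨fun i => hbound _ (hmem i), fun i j hij => hw (habs (hmem i) (hmem j) hij)⟩, ?_, hpin⟩
  rwa [← himage, filter_image, card_image_of_injective _ hw] at heven

/-- All values but `p` are made negative; the sign `q = ±p` of `p` is left free to fix the
parity of the number of negative values. -/
def resign (p q v : ℤ) : ℤ := if v = p then q else -|v|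

theorem abs_resign {p q : ℤ} (h : |q| = |p|) (v : ℤ) : |resign p q v| = |v| := by
  by_cases hvp : v = p
  · rw [resign, if_pos hvp, h, hvp]
  · rw [resign, if_neg hvp, abs_neg, abs_abs]

theorem resign_neg {p q v : ℤ} (hv : v ≠ 0) (hvp : v ≠ p) : resign p q v < 0 := by
  rw [resign, if_neg hvp, neg_neg_iff_pos, abs_pos]
  exact hv

theorem exists_even_card_filter_resign_neg {V : Finset ℤ} (h0 : 0 ∉ V) {p : ℤ} (hp : p ∈ V)
    (hpos : 0 < p) (c : ℕ) : ∃ q, |q| = p ∧ (0 ≤ q → q = p) ∧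
      Even (c + #(V.filter (fun v => resign p q v < 0))) := by
  have hne : ∀ v ∈ V, v ≠ 0 := fun v hv h => h0 (h ▸ hv)
  rcases Nat.even_or_odd (c + #V) with h | h
  · refine ⟨-p, by rw [abs_neg, abs_of_pos hpos], fun h => by omega, ?_⟩
    rwa [filter_true_of_mem fun v hv => ?_]
    by_cases hvp : v = p
    · rw [resign, if_pos hvp]
      omega
    · exact resign_neg (hne v hv) hvp
  · refine ⟨p, abs_of_pos hpos, fun _ => rfl, ?_⟩
    have : V.filter (fun v => resign p p v < 0) = V.erase p := by
      ext v
      rw [mem_filter, mem_erase]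
      by_cases hvp : v = p
      · rw [resign, if_pos hvp]
        exact ⟨fun h => by omega, fun h => absurd hvp h.1⟩
      · exact ⟨fun h => ⟨hvp, h.1⟩, fun h => ⟨h.2, resign_neg (hne v h.2) hvp⟩⟩
    rw [this, card_erase_of_mem hp]
    have := card_pos.mpr ⟨p, hp⟩
    obtain ⟨k, hk⟩ := h
    exact ⟨k, by omega⟩

theorem exists_resign {V : Finset ℤ} (h0 : 0 ∉ V) (hV : Set.InjOn (|·|) (V : Set ℤ)) {p : ℤ}
    (hp : p ∈ V) (hpos : 0 < p) (c : ℕ) :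
    ∃ U : Finset ℤ, U.image (|·|) = V.image (|·|) ∧ Set.InjOn (|·|) (U : Set ℤ) ∧
      (∀ v ∈ V, v < 0 → v ∈ U) ∧ (∀ u ∈ U, 0 ≤ u → u ∈ V) ∧ Even (c + #(U.filter (· < 0))) := by
  obtain ⟨q, hq, hqp, hpar⟩ := exists_even_card_filter_resign_neg h0 hp hpos c
  have habs := abs_resign (p := p) (q := q) (by rw [hq, abs_of_pos hpos])
  have hinj : Set.InjOn (resign p q) V := fun v hv v' hv' h =>
    hV hv hv' (by simpa only [habs] using congrArg abs h)
  have himage : (V.image (resign p q)).image (|·|) = V.image (|·|) := by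
    rw [image_image]
    exact image_congr fun v _ => habs v
  refine ⟨V.image (resign p q), himage, ?_, fun v hv hv0 => ?_, fun u hu hu0 => ?_, ?_⟩
  · refine card_image_iff.mp (le_antisymm card_image_le ?_)
    rw [himage, card_image_of_injOn hV, card_image_of_injOn hinj]
  · have hvp : v ≠ p := by omega
    exact mem_image.mpr ⟨v, hv, by rw [resign, if_neg hvp, abs_of_neg hv0, neg_neg]⟩
  · obtain ⟨v, hv, rfl⟩ := mem_image.mp hu
    by_cases hvp : v = p
    · rw [resign, if_pos hvp] at hu0 ⊢
      exact hqp hu0 ▸ hp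
    · exact absurd hu0 (not_le.mpr (resign_neg (fun h => h0 (h ▸ hv)) hvp))
  · rwa [filter_image, card_image_of_injOn (hinj.mono (filter_subset _ _))]

theorem IsSignedPerm.injective {n : ℕ} {w : Fin n → ℤ} (hw : IsSignedPerm n w) : Injective w :=
  fun i j h => hw.2 (by simp only [h])

theorem IsSignedPerm.injOn_abs {n : ℕ} {w : Fin n → ℤ} (hw : IsSignedPerm n w) :
    Set.InjOn (|·|) (univ.image w : Set ℤ) := by
  rintro _ hx _ hy h
  obtain ⟨j, -, rfl⟩ := mem_image.mp hx
  obtain ⟨j', -, rfl⟩ := mem_image.mp hy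
  exact congrArg w (hw.2 h)

theorem PinSet.subset_image {n : ℕ} {w : Fin n → ℤ} {S : Finset ℤ} (hS : PinSet n w = S) :
    S ⊆ univ.image w := fun s hs => by
  obtain ⟨q, hq, rfl⟩ := PinSet.mem_pinSet_iff.mp (by rw [hS]; exact hs)
  exact PinSet.entry_mem_image w (by have := hq.2.1; omega)

theorem apsD_of_pos_notMem_pinSet {n : ℕ} {w : Fin n → ℤ} {S : Finset ℤ} (hw : IsSignedPerm n w)
    (hS : PinSet n w = S) {i : Fin n} (hpos : 0 < w i) (hi : w i ∉ S) : APSD n S := by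
  set X := univ.image w
  have hX : ∀ x ∈ X, 1 ≤ |x| ∧ |x| ≤ n := by
    simpa only [X, forall_mem_image, mem_univ, true_implies] using hw.1
  have hXabs := hw.injOn_abs
  have hSX := PinSet.subset_image hS
  set V := X \ S
  have hVabs : Set.InjOn (|·|) (V : Set ℤ) := hXabs.mono (coe_subset.mpr sdiff_subset)
  obtain ⟨U, hUimage, hUabs, hlow, hhigh, heven⟩ :=
    exists_resign (fun h => by simpa using (hX 0 (mem_sdiff.mp h).1).1) hVabs
      (mem_sdiff.mpr ⟨mem_image_of_mem w (mem_univ i), hi⟩) hpos #(S.filter (· < 0))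
  have habs_ne : ∀ s ∈ S, ∀ u ∈ U, |s| ≠ |u| := fun s hs u hu h => by
    obtain ⟨v, hv, hvu⟩ := mem_image.mp (hUimage ▸ mem_image_of_mem (|·|) hu)
    rw [mem_sdiff] at hv
    exact hv.2 (hXabs (hSX hs) hv.1 (h.trans hvu.symm) ▸ hs)
  have hdisj : Disjoint S U := disjoint_left.mpr fun s hs hu => habs_ne s hs s hu rfl
  have hUcard : #U = #V := by
    rw [← card_image_of_injOn hUabs, hUimage, card_image_of_injOn hVabs]
  refine apsD_of_apsOn (apsOn_union hdisj fun s hs => ?_) (fun x hx => ?_) ?_ ?_ ?_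
  · exact (PinSet.card_filter_lt_add_two_le hw.injective hS hs).trans
      (card_filter_lt_le_card_filter_lt hUcard.ge hlow hhigh s)
  · rcases mem_union.mp hx with hx | hx
    · exact hX x (hSX hx)
    · obtain ⟨v, hv, hvx⟩ := mem_image.mp (hUimage ▸ mem_image_of_mem (|·|) hx)
      exact hvx ▸ hX v (mem_sdiff.mp hv).1
  · rw [coe_union, Set.injOn_union (disjoint_coe.mpr hdisj)]
    exact ⟨hXabs.mono (coe_subset.mpr hSX), hUabs, habs_ne⟩
  · rw [card_union_of_disjoint hdisj, hUcard, add_comm, card_sdiff_add_card_eq_card hSX,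
      card_image_of_injective _ hw.injective, card_univ, Fintype.card_fin]
  · rwa [filter_union, card_union_of_disjoint (disjoint_filter_filter hdisj)]

theorem stmt12_general (k : ℕ) (S : Finset ℤ)
    (h2 : ¬ APSD (2 * k + 1) S) :
    ∀ w : Fin (2 * k + 1) → ℤ, IsSignedPerm (2 * k + 1) w →
      PinSet (2 * k + 1) w = ↑S → ∀ i, w i ∉ S → w i < 0 := by
  intro w hw hS i hi
  by_contra! hnonneg
  have hne : w i ≠ 0 := abs_pos.mp (zero_lt_one.trans_le (hw.1 i).1)
  exact h2 (apsD_of_pos_notMem_pinSet hw hS (hnonneg.lt_of_ne' hne) hi)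

theorem stmt12 (k : ℕ) (S : Finset ℤ) (h1 : APSB (2 * k + 1) S)
    (h2 : ¬ APSD (2 * k + 1) S) :
    ∀ w : Fin (2 * k + 1) → ℤ, IsSignedPerm (2 * k + 1) w →
      PinSet (2 * k + 1) w = ↑S → ∀ i, w i ∉ S → w i < 0 :=
  stmt12_general k S h2
end
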